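/- Let d ≥ 2. There exists ε₀ = ε₀(d) > 0 such that for every 0 < ε < ε₀ there is a constant C = C(d, ε, ψ) with the following property. Let j ≥ 1 be an integer and let s be an integer with 1 ≤ s ≤ ε j. Let A, B, Q be integers with gcd(A, B, Q) = 1 and 2^{s−1} ≤ Q < 2^s, and let (λ, β) ∈ ℝ² satisfy |λ − A/Q| ≤ 2^{(ε−d)j} and |β − B/Q| ≤ 2^{(ε−1)j}. Then | M_j(λ, β) − S(A/Q, B/Q) · H_j(λ − A/Q, β − B/Q) | ≤ C 2^{(2ε − 1)j}. In particular, if in addition gcd(A, Q) > 1, then |M_j(λ, β)| ≤ C 2^{(2ε − 1)j}. -/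

import Mathlib

noncomputable section

/-- `e t = exp(2πi t)`. -/
def e (t : ℝ) : ℂ := Complex.exp (2 * Real.pi * Complex.I * t)

/-- Dyadic dilate `ψ_k(x) = 2^{-k} ψ(2^{-k} x)`. -/
def psik (ψ : ℝ → ℝ) (k : ℤ) (x : ℝ) : ℝ := (2 : ℝ) ^ (-k) * ψ ((2 : ℝ) ^ (-k) * x)

/-- The single-scale multiplier `M_j(λ,β) = Σ_m ψ_j(m) e(−λ m^d − β m)` (a finite sum). -/
def Mj (d : ℕ) (ψ : ℝ → ℝ) (j : ℕ) (lam β : ℝ) : ℂ :=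
  ∑' m : ℤ, (psik ψ (j : ℤ) (m : ℝ) : ℂ) * e (-(lam * (m : ℝ) ^ d + β * (m : ℝ)))

/-- The continuous analogue `H_j(x,y) = ∫ e(−x t^d − y t) ψ_j(t) dt`. -/
def Hj (d : ℕ) (ψ : ℝ → ℝ) (j : ℕ) (x y : ℝ) : ℂ :=
  ∫ t : ℝ, e (-(x * t ^ d + y * t)) * (psik ψ (j : ℤ) t : ℂ)

/-- The Weyl (Gauss) sum `S(A/Q, B/Q) = Q⁻¹ Σ_{r<Q} e(−(A/Q) r^d − (B/Q) r)`. -/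
def weylS (d : ℕ) (A B : ℤ) (Q : ℕ) : ℂ :=
  (Q : ℂ)⁻¹ * ∑ r ∈ Finset.range Q,
    e (-(((A : ℝ) / Q) * (r : ℝ) ^ d + ((B : ℝ) / Q) * (r : ℝ)))

lemma e_add (x y : ℝ) : e (x + y) = e x * e y := by
  simp only [e, ← Complex.exp_add]; push_cast; ring_nf

lemma e_int (n : ℤ) : e n = 1 := by
  simp only [e]
  have : (2 : ℂ) * Real.pi * Complex.I * (n : ℝ) = (n : ℤ) * (2 * Real.pi * Complex.I) := by
    push_cast; ring
  rw [this, Complex.exp_int_mul_two_pi_mul_I]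

lemma e_add_int (x : ℝ) (n : ℤ) : e (x + n) = e x := by
  rw [e_add, e_int, mul_one]

lemma norm_e (x : ℝ) : ‖e x‖ = 1 := by
  have : (2 : ℂ) * Real.pi * Complex.I * (x : ℝ) = ((2 * Real.pi * x : ℝ) : ℂ) * Complex.I := by
    push_cast; ring
  rw [e, this, Complex.norm_exp_ofReal_mul_I]

lemma e_nat_mul (x : ℝ) (n : ℕ) : e (n * x) = (e x) ^ n := by
  induction n with
  | zero => simpa using e_int 0
  | succ k ih =>
    have : ((k : ℝ) + 1) * x = k * x + x := by ring
    push_cast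
    rw [this, e_add, ih, pow_succ]

lemma e_eq_one_iff (x : ℝ) : e x = 1 ↔ ∃ n : ℤ, x = n := by
  rw [e, Complex.exp_eq_one_iff]
  constructor
  · rintro ⟨n, hn⟩
    refine ⟨n, ?_⟩
    have h2 : (2 : ℂ) * Real.pi * Complex.I ≠ 0 := by
      refine mul_ne_zero (mul_ne_zero two_ne_zero ?_) Complex.I_ne_zero
      exact_mod_cast Complex.ofReal_ne_zero.mpr Real.pi_ne_zero
    have h3 : (2 : ℂ) * Real.pi * Complex.I * (x : ℂ)
        = 2 * Real.pi * Complex.I * (n : ℂ) := by linear_combination hn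
    have : (x : ℂ) = (n : ℂ) := mul_left_cancel₀ h2 h3
    exact_mod_cast this
  · rintro ⟨n, rfl⟩
    exact ⟨n, by push_cast; ring⟩

lemma weylS_eq_zero (d : ℕ) (A B : ℤ) (Q : ℕ) (hQ : 0 < Q)
    (hgcd : Int.gcd A (Int.gcd B (Q : ℤ)) = 1) (hAQ : 1 < Int.gcd A (Q : ℤ)) :
    weylS d A B Q = 0 := by
  set G : ℕ := Int.gcd A (Q : ℤ) with hG
  have hGA : (G : ℤ) ∣ A := Int.gcd_dvd_left _ _
  have hGQZ : (G : ℤ) ∣ (Q : ℤ) := Int.gcd_dvd_right _ _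
  have hGQ : G ∣ Q := Int.natCast_dvd_natCast.mp hGQZ
  have hGpos : 0 < G := lt_trans one_pos hAQ
  set Q' : ℕ := Q / G with hQ'
  have hQQ' : Q = Q' * G := (Nat.div_mul_cancel hGQ).symm
  have hQ'pos : 0 < Q' := by
    rcases Nat.eq_zero_or_pos Q' with h | h
    · rw [hQQ', h, zero_mul] at hQ; exact absurd hQ (lt_irrefl 0)
    · exact h
  obtain ⟨A', hA'⟩ := id hGA
  -- the character value
  set z : ℂ := e (-((B : ℝ) / G)) with hz
  have hzG : z ^ G = 1 := by
    rw [← e_nat_mul]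
    have : (G : ℝ) * -((B : ℝ) / G) = -B := by
      have hGne : (G : ℝ) ≠ 0 := by positivity
      field_simp
    rw [this]
    exact_mod_cast e_int (-B)
  have hzne : z ≠ 1 := by
    intro h
    obtain ⟨n, hn⟩ := (e_eq_one_iff _).mp h
    have hBG : (G : ℤ) ∣ B := by
      have : (B : ℝ) = ((-n * G : ℤ) : ℝ) := by
        push_cast
        have hGne : (G : ℝ) ≠ 0 := by positivity
        field_simp at hn ⊢
        linarith [hn]
      have : B = -n * G := by exact_mod_cast this
      exact ⟨-n, by linarith [this]⟩
    have h1 : (G : ℤ) ∣ (Int.gcd B (Q : ℤ) : ℤ) := Int.dvd_coe_gcd hBG hGQZ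
    have h2 : (G : ℤ) ∣ (Int.gcd A (Int.gcd B (Q : ℤ)) : ℤ) := Int.dvd_coe_gcd hGA h1
    rw [hgcd] at h2
    have : G ∣ 1 := by exact_mod_cast h2
    rw [Nat.dvd_one] at this
    omega
  -- factor each term
  have hterm : ∀ a b : ℕ, a < Q' → b < G →
      e (-(((A : ℝ) / Q) * ((a + Q' * b : ℕ) : ℝ) ^ d + ((B : ℝ) / Q) * ((a + Q' * b : ℕ) : ℝ)))
        = e (-(((A : ℝ) / Q) * (a : ℝ) ^ d + ((B : ℝ) / Q) * (a : ℝ))) * z ^ b := by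
    intro a b _ _
    obtain ⟨D, hD⟩ := sub_dvd_pow_sub_pow ((a : ℤ) + Q' * b) (a : ℤ) d
    have hsub : ((a : ℤ) + Q' * b) - a = Q' * b := by ring
    rw [hsub] at hD
    -- A * (x^d - a^d) = Q * k with k = A' * b * D
    set k : ℤ := A' * b * D with hk
    have hQk : A * (((a : ℤ) + Q' * b) ^ d - (a : ℤ) ^ d) = (Q : ℤ) * k := by
      rw [hD, hA', hk]
      have : ((Q : ℤ)) = (Q' : ℤ) * G := by exact_mod_cast hQQ'
      rw [this]; ring
    have hQne : (Q : ℝ) ≠ 0 := by positivity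
    have hGne : (G : ℝ) ≠ 0 := by positivity
    have hQ'ne : (Q' : ℝ) ≠ 0 := by positivity
    -- real-level identity for the pow part
    have hpow : ((A : ℝ) / Q) * (((a : ℕ) + Q' * b : ℕ) : ℝ) ^ d
        = ((A : ℝ) / Q) * (a : ℝ) ^ d + (k : ℝ) := by
      have hc : (((a : ℕ) + Q' * b : ℕ) : ℝ) = (((a : ℤ) + Q' * b : ℤ) : ℝ) := by push_cast; ring
      rw [hc]
      have : ((A : ℝ)) * ((((a : ℤ) + Q' * b : ℤ) : ℝ) ^ d - ((a : ℤ) : ℝ) ^ d)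
          = (Q : ℝ) * (k : ℝ) := by exact_mod_cast congrArg (Int.cast : ℤ → ℝ) hQk
      field_simp
      push_cast at this ⊢
      linarith [this]
    have hlin : ((B : ℝ) / Q) * (((a : ℕ) + Q' * b : ℕ) : ℝ)
        = ((B : ℝ) / Q) * (a : ℝ) + (B : ℝ) * b / G := by
      have : ((Q : ℝ)) = (Q' : ℝ) * G := by exact_mod_cast hQQ'
      rw [this]
      push_cast
      field_simp
    rw [hpow, hlin]
    have harg : -((((A : ℝ) / Q) * (a : ℝ) ^ d + (k : ℝ)) + (((B : ℝ) / Q) * (a : ℝ) + (B : ℝ) * b / G))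
        = (-(((A : ℝ) / Q) * (a : ℝ) ^ d + ((B : ℝ) / Q) * (a : ℝ)) + (b : ℝ) * -((B : ℝ) / G)) + ((-k : ℤ) : ℝ) := by
      push_cast; ring
    rw [harg, e_add_int, e_add, e_nat_mul]
  -- reindex the sum
  have hsum : ∑ r ∈ Finset.range Q,
      e (-(((A : ℝ) / Q) * (r : ℝ) ^ d + ((B : ℝ) / Q) * (r : ℝ)))
      = ∑ p ∈ Finset.range Q' ×ˢ Finset.range G,
        e (-(((A : ℝ) / Q) * ((p.1 + Q' * p.2 : ℕ) : ℝ) ^ d + ((B : ℝ) / Q) * ((p.1 + Q' * p.2 : ℕ) : ℝ))) := by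
    refine Finset.sum_nbij' (fun r => (r % Q', r / Q')) (fun p => p.1 + Q' * p.2) ?_ ?_ ?_ ?_ ?_
    · intro a ha
      rw [Finset.mem_range] at ha
      rw [Finset.mem_product, Finset.mem_range, Finset.mem_range]
      refine ⟨Nat.mod_lt _ hQ'pos, ?_⟩
      have ha' : a < G * Q' := by rw [mul_comm, ← hQQ']; exact ha
      exact Nat.div_lt_iff_lt_mul hQ'pos |>.mpr ha'
    · intro p hp
      rw [Finset.mem_product, Finset.mem_range, Finset.mem_range] at hp
      rw [Finset.mem_range, hQQ']
      calc p.1 + Q' * p.2 < Q' + Q' * p.2 := Nat.add_lt_add_right hp.1 _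
        _ = Q' * (p.2 + 1) := by ring
        _ ≤ Q' * G := Nat.mul_le_mul_left _ hp.2
    · intro a _; simp [Nat.mod_add_div]
    · intro p hp
      simp only [Finset.mem_product, Finset.mem_range] at hp
      have h1 : (p.1 + Q' * p.2) % Q' = p.1 := by
        rw [Nat.add_mul_mod_self_left, Nat.mod_eq_of_lt hp.1]
      have h2 : (p.1 + Q' * p.2) / Q' = p.2 := by
        rw [Nat.add_mul_div_left _ _ hQ'pos, Nat.div_eq_of_lt hp.1, zero_add]
      simp [h1, h2]
    · intro a ha
      have : a = (a % Q') + Q' * (a / Q') := by rw [Nat.mod_add_div]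
      conv_lhs => rw [this]
  rw [weylS, hsum, Finset.sum_product]
  have : ∀ a ∈ Finset.range Q', ∀ b ∈ Finset.range G,
      e (-(((A : ℝ) / Q) * ((a + Q' * b : ℕ) : ℝ) ^ d + ((B : ℝ) / Q) * ((a + Q' * b : ℕ) : ℝ)))
        = e (-(((A : ℝ) / Q) * (a : ℝ) ^ d + ((B : ℝ) / Q) * (a : ℝ))) * z ^ b := by
    intro a ha b hb
    exact hterm a b (Finset.mem_range.mp ha) (Finset.mem_range.mp hb)
  rw [Finset.sum_congr rfl (fun a ha => Finset.sum_congr rfl (fun b hb => this a ha b hb))]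
  have hgeom : ∑ b ∈ Finset.range G, z ^ b = 0 := by
    rw [geom_sum_eq hzne, hzG, sub_self, zero_div]
  have : ∀ a ∈ Finset.range Q',
      ∑ b ∈ Finset.range G, e (-(((A : ℝ) / Q) * (a : ℝ) ^ d + ((B : ℝ) / Q) * (a : ℝ))) * z ^ b = 0 := by
    intro a _
    rw [← Finset.mul_sum, hgeom, mul_zero]
  rw [Finset.sum_congr rfl this, Finset.sum_const, smul_zero, mul_zero]

lemma key (f : ℝ → ℂ) (hf : Continuous f)
    (L : ℝ) (hL : 0 ≤ L) (hlip : ∀ x y : ℝ, ‖f x - f y‖ ≤ L * |x - y|)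
    (Q : ℕ) (hQ : 0 < Q) (r : ℕ) (hr : r < Q) (N : ℕ) (T' : ℝ)
    (hsupp : ∀ t : ℝ, T' ≤ |t| → f t = 0) (hcov : T' + Q ≤ (N : ℝ) * Q) :
    ‖(∑ i ∈ Finset.range (2*N+1), f ((((i : ℤ) - (N : ℤ)) * Q + r : ℤ) : ℝ))
      - (Q : ℂ)⁻¹ * ∫ t : ℝ, f t‖ ≤ (2*N+1 : ℝ) * (L * Q) := by
  have hQR : (0 : ℝ) < Q := by exact_mod_cast hQ
  have hrR : (r : ℝ) < Q := by exact_mod_cast hr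
  have hNR : (0 : ℝ) ≤ N := by positivity
  set a : ℕ → ℝ := fun i => ((i : ℝ) - N) * Q + r with ha
  have hstep : ∀ i, a (i+1) = a i + Q := by intro i; simp only [ha]; push_cast; ring
  have hInt : ∀ u v : ℝ, IntervalIntegrable f MeasureTheory.volume u v :=
    fun u v => hf.intervalIntegrable u v
  have hle : a 0 ≤ a (2*N+1) := by
    simp only [ha]; push_cast
    nlinarith [hQR, hNR]
  have hIoc : ∫ t : ℝ, f t = ∫ t in (a 0)..(a (2*N+1)), f t := by
    rw [intervalIntegral.integral_of_le hle]
    refine (MeasureTheory.setIntegral_eq_integral_of_forall_compl_eq_zero ?_).symm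
    intro x hx
    simp only [Set.mem_Ioc, not_and_or, not_lt, not_le] at hx
    apply hsupp
    rcases hx with hx | hx
    · have h0 : a 0 ≤ -T' := by
        simp only [ha]; push_cast
        nlinarith [hcov, hrR]
      refine le_abs.mpr (Or.inr ?_)
      linarith [le_trans hx h0]
    · have h1 : T' ≤ a (2*N+1) := by
        simp only [ha]; push_cast
        nlinarith [hcov, hQR]
      exact le_abs.mpr (Or.inl (le_trans h1 hx.le))
  have hadj : ∑ i ∈ Finset.range (2*N+1), ∫ t in (a i)..(a (i+1)), f t
      = ∫ t in (a 0)..(a (2*N+1)), f t :=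
    intervalIntegral.sum_integral_adjacent_intervals (fun i _ => hInt _ _)
  have hsplit : (Q : ℂ)⁻¹ * ∫ t : ℝ, f t
      = ∑ i ∈ Finset.range (2*N+1), (Q : ℂ)⁻¹ * ∫ t in (a i)..(a (i+1)), f t := by
    rw [hIoc, ← hadj, Finset.mul_sum]
  have hcast : ∀ i : ℕ, ((((i : ℤ) - (N : ℤ)) * Q + r : ℤ) : ℝ) = a i := by
    intro i; simp only [ha]; push_cast; ring
  have hterm : ∀ i : ℕ, ‖f (a i) - (Q:ℂ)⁻¹ * ∫ t in (a i)..(a (i+1)), f t‖ ≤ L * Q := by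
    intro i
    rw [hstep i]
    set x := a i with hx
    have h1 : ∫ t in x..(x+Q), (f x - f t) = (Q : ℝ) • f x - ∫ t in x..(x+Q), f t := by
      rw [intervalIntegral.integral_sub intervalIntegrable_const (hInt _ _),
        intervalIntegral.integral_const]
      congr 2
      ring
    have h2 : f x - (Q:ℂ)⁻¹ * ∫ t in x..(x+Q), f t
        = (Q:ℂ)⁻¹ * ∫ t in x..(x+Q), (f x - f t) := by
      rw [h1, mul_sub]
      congr 1
      rw [Complex.real_smul]
      push_cast
      rw [← mul_assoc, inv_mul_cancel₀ (by exact_mod_cast hQ.ne' : (Q:ℂ) ≠ 0), one_mul]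
    rw [h2, norm_mul]
    have hb : ‖∫ t in x..(x+Q), (f x - f t)‖ ≤ (L*Q) * |x + Q - x| := by
      apply intervalIntegral.norm_integral_le_of_norm_le_const
      intro t ht
      rw [Set.uIoc_of_le (by linarith : x ≤ x + Q)] at ht
      obtain ⟨ht1, ht2⟩ := ht
      have h3 : |x - t| ≤ Q := by
        rw [abs_sub_comm, abs_of_pos (by linarith : (0:ℝ) < t - x)]
        linarith
      calc ‖f x - f t‖ ≤ L * |x - t| := hlip x t
        _ ≤ L * Q := mul_le_mul_of_nonneg_left h3 hL
    have hnorm : ‖(Q:ℂ)⁻¹‖ = (Q:ℝ)⁻¹ := by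
      rw [norm_inv]
      norm_cast
    rw [hnorm]
    have habs : |x + Q - x| = (Q:ℝ) := by
      rw [abs_of_pos (by linarith)]
      ring
    rw [habs] at hb
    calc (Q:ℝ)⁻¹ * ‖∫ t in x..(x+Q), (f x - f t)‖ ≤ (Q:ℝ)⁻¹ * ((L*Q)*Q) := by
          exact mul_le_mul_of_nonneg_left hb (by positivity)
      _ = L * Q := by field_simp
  have hrw : (∑ i ∈ Finset.range (2*N+1), f ((((i : ℤ) - (N : ℤ)) * Q + r : ℤ) : ℝ))
      - (Q : ℂ)⁻¹ * ∫ t : ℝ, f t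
      = ∑ i ∈ Finset.range (2*N+1),
          (f (a i) - (Q:ℂ)⁻¹ * ∫ t in (a i)..(a (i+1)), f t) := by
    rw [Finset.sum_sub_distrib, ← hsplit]
    congr 1
    exact Finset.sum_congr rfl (fun i _ => by rw [hcast i])
  rw [hrw]
  calc ‖∑ i ∈ Finset.range (2*N+1),
          (f (a i) - (Q:ℂ)⁻¹ * ∫ t in (a i)..(a (i+1)), f t)‖
      ≤ ∑ i ∈ Finset.range (2*N+1), ‖f (a i) - (Q:ℂ)⁻¹ * ∫ t in (a i)..(a (i+1)), f t‖ :=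
        norm_sum_le _ _
    _ ≤ ∑ _i ∈ Finset.range (2*N+1), (L * Q) :=
        Finset.sum_le_sum (fun i _ => hterm i)
    _ = (2*N+1 : ℝ) * (L * Q) := by
        rw [Finset.sum_const, Finset.card_range, nsmul_eq_mul]
        push_cast
        ring

lemma sum_Icc_eq_double (F : ℤ → ℂ) (Q N : ℕ) (hQ : 0 < Q) :
    ∑ m ∈ Finset.Icc (-(N*Q : ℤ)) ((N+1)*Q - 1), F m
      = ∑ r ∈ Finset.range Q, ∑ i ∈ Finset.range (2*N+1), F (((i:ℤ) - N)*Q + r) := by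
  have hQZ : (0:ℤ) < Q := by exact_mod_cast hQ
  rw [← Finset.sum_product']
  refine Finset.sum_nbij' (fun m => (((m % Q).toNat : ℕ), ((m / Q + N).toNat : ℕ)))
    (fun p => ((p.2:ℤ) - N)*Q + p.1) ?_ ?_ ?_ ?_ ?_
  · intro m hm
    rw [Finset.mem_Icc] at hm
    rw [Finset.mem_product, Finset.mem_range, Finset.mem_range]
    have h1 : 0 ≤ m % Q := Int.emod_nonneg m hQZ.ne'
    have h2 : m % Q < Q := Int.emod_lt_of_pos m hQZ
    have h3 : -(N:ℤ) ≤ m / Q := by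
      rw [Int.le_ediv_iff_mul_le hQZ]
      have : -(N:ℤ) * Q = -((N:ℤ)*Q) := by ring
      rw [this]
      exact hm.1
    have h4 : m / Q < (N:ℤ) + 1 := by
      rw [Int.ediv_lt_iff_lt_mul hQZ]
      have : ((N:ℤ) + 1) * Q = ((N+1:ℕ):ℤ) * Q := by push_cast; ring
      rw [this]
      omega
    constructor
    · omega
    · omega
  · intro p hp
    rw [Finset.mem_product, Finset.mem_range, Finset.mem_range] at hp
    rw [Finset.mem_Icc]
    have h1 : (0:ℤ) ≤ p.1 := Int.natCast_nonneg _
    have h2 : (p.1:ℤ) < Q := by exact_mod_cast hp.1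
    have h3 : (0:ℤ) ≤ (p.2:ℤ) := Int.natCast_nonneg _
    have h4 : (p.2:ℤ) ≤ 2*N := by
      have := hp.2; omega
    constructor
    · have : (-(N:ℤ)) * Q ≤ ((p.2:ℤ) - N) * Q :=
        mul_le_mul_of_nonneg_right (by omega) hQZ.le
      push_cast at this ⊢
      nlinarith
    · have : ((p.2:ℤ) - N) * Q ≤ (N:ℤ) * Q :=
        mul_le_mul_of_nonneg_right (by omega) hQZ.le
      push_cast at this ⊢
      nlinarith
  · intro m hm
    dsimp only
    rw [Finset.mem_Icc] at hm
    have h1 : 0 ≤ m % Q := Int.emod_nonneg m hQZ.ne'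
    have h3 : -(N:ℤ) ≤ m / Q := by
      rw [Int.le_ediv_iff_mul_le hQZ]
      have : -(N:ℤ) * Q = -((N:ℤ)*Q) := by ring
      rw [this]
      exact hm.1
    have e1 : (((m / Q + N).toNat : ℤ)) = m / Q + N := Int.toNat_of_nonneg (by omega)
    have e2 : (((m % Q).toNat : ℤ)) = m % Q := Int.toNat_of_nonneg h1
    simp only [e1, e2]
    have : (m / Q + (N:ℤ) - N) * Q + m % Q = Q * (m / Q) + m % Q := by ring
    rw [this, Int.mul_ediv_add_emod]
  · intro p hp
    rw [Finset.mem_product, Finset.mem_range, Finset.mem_range] at hp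
    have h2 : (p.1:ℤ) < Q := by exact_mod_cast hp.1
    have hmod : (((p.2:ℤ) - N)*Q + p.1) % Q = p.1 := by
      rw [add_comm, Int.add_mul_emod_self_right, Int.emod_eq_of_lt (Int.natCast_nonneg _) h2]
    have hdiv : (((p.2:ℤ) - N)*Q + p.1) / Q = (p.2:ℤ) - N := by
      rw [add_comm, Int.add_mul_ediv_right _ _ hQZ.ne',
        Int.ediv_eq_zero_of_lt (Int.natCast_nonneg _) h2, zero_add]
    rw [hmod, hdiv]
    have : (p.2:ℤ) - N + N = (p.2:ℤ) := by ring
    rw [this]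
    simp
  · intro m hm
    dsimp only
    rw [Finset.mem_Icc] at hm
    have h1 : 0 ≤ m % Q := Int.emod_nonneg m hQZ.ne'
    have h3 : -(N:ℤ) ≤ m / Q := by
      rw [Int.le_ediv_iff_mul_le hQZ]
      have : -(N:ℤ) * Q = -((N:ℤ)*Q) := by ring
      rw [this]
      exact hm.1
    have e1 : (((m / Q + N).toNat : ℤ)) = m / Q + N := Int.toNat_of_nonneg (by omega)
    have e2 : (((m % Q).toNat : ℤ)) = m % Q := Int.toNat_of_nonneg h1
    congr 1
    rw [e1, e2]
    have : (m / Q + (N:ℤ) - N) * Q + m % Q = Q * (m / Q) + m % Q := by ring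
    rw [this, Int.mul_ediv_add_emod]

lemma g_periodic (d : ℕ) (A B : ℤ) (Q : ℕ) (hQ : 0 < Q) (n r : ℤ) :
    e (-((A:ℝ)/Q * ((n*(Q:ℤ) + r : ℤ):ℝ)^d + (B:ℝ)/Q * ((n*(Q:ℤ) + r : ℤ):ℝ)))
      = e (-((A:ℝ)/Q * ((r:ℤ):ℝ)^d + (B:ℝ)/Q * ((r:ℤ):ℝ))) := by
  obtain ⟨D, hD⟩ := sub_dvd_pow_sub_pow (n*(Q:ℤ) + r) r d
  have hsub : (n*(Q:ℤ) + r) - r = n*Q := by ring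
  rw [hsub] at hD
  have hQne : (Q:ℝ) ≠ 0 := by positivity
  set k : ℤ := -(A * (n * D) + B * n) with hk
  have hDR : ((n*(Q:ℤ) + r : ℤ):ℝ)^d - ((r:ℤ):ℝ)^d = (n:ℝ)*(Q:ℝ)*(D:ℝ) := by
    exact_mod_cast congrArg (fun z : ℤ => (z : ℝ)) hD
  have harg : -((A:ℝ)/Q * ((n*(Q:ℤ) + r : ℤ):ℝ)^d + (B:ℝ)/Q * ((n*(Q:ℤ) + r : ℤ):ℝ))
      = -((A:ℝ)/Q * ((r:ℤ):ℝ)^d + (B:ℝ)/Q * ((r:ℤ):ℝ)) + (k:ℝ) := by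
    have h1 : (A:ℝ)/Q * ((n*(Q:ℤ) + r : ℤ):ℝ)^d
        = (A:ℝ)/Q * ((r:ℤ):ℝ)^d + (A:ℝ) * n * D := by
      have : (A:ℝ)/Q * (((n*(Q:ℤ) + r : ℤ):ℝ)^d - ((r:ℤ):ℝ)^d) = (A:ℝ) * n * D := by
        rw [hDR]; field_simp
      linarith [this]
    have h2 : (B:ℝ)/Q * ((n*(Q:ℤ) + r : ℤ):ℝ) = (B:ℝ)/Q * ((r:ℤ):ℝ) + (B:ℝ)*n := by
      push_cast
      field_simp
      ring
    rw [h1, h2, hk]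
    push_cast
    ring
  rw [harg, e_add_int]

lemma hasDerivAt_e_comp {c : ℝ → ℝ} {c' : ℝ} {t : ℝ} (h : HasDerivAt c c' t) :
    HasDerivAt (fun u => e (c u)) (2 * Real.pi * Complex.I * c' * e (c t)) t := by
  have h1 : HasDerivAt (fun u => ((c u : ℝ) : ℂ)) ((c' : ℝ) : ℂ) t := h.ofReal_comp
  have h2 := (h1.const_mul (2 * (Real.pi : ℂ) * Complex.I)).cexp
  simp only [e]
  convert h2 using 1
  ring

lemma norm_two_pi_I_mul (c' : ℝ) :
    ‖(2 * (Real.pi:ℂ) * Complex.I) * (c' : ℂ)‖ = 2 * Real.pi * |c'| := by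
  simp only [norm_mul, Complex.norm_I, Complex.norm_real, Real.norm_eq_abs]
  rw [abs_of_pos Real.pi_pos]
  norm_num

set_option maxHeartbeats 1000000 in
/-- the major-box approximation
`M_j(λ,β) = S(A/Q,B/Q) H_j(λ−A/Q, β−B/Q) + O(2^{(2ε−1)j})` for `(λ,β)` in the `j`-th major
box at `(A/Q, B/Q)` with `2^{s−1} ≤ Q < 2^s`, `1 ≤ s ≤ εj`; in particular `M_j = O(2^{(2ε−1)j})`
there when `gcd(A,Q) > 1`. -/
theorem stmt_16 (d : ℕ) (hd : 2 ≤ d)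
    (ψ : ℝ → ℝ) (hψ : ContDiff ℝ (⊤ : ℕ∞) ψ) (hψodd : ∀ x, ψ (-x) = -ψ x)
    (c₁ c₂ : ℝ) (hc₁ : 0 < c₁) (hc₁₂ : c₁ < c₂)
    (hψsupp : ∀ x, ψ x ≠ 0 → c₁ ≤ |x| ∧ |x| ≤ c₂)
    (hψsum : ∀ x : ℝ, 1 ≤ |x| →
      ∑' j : ℕ, (2 : ℝ) ^ (-(j + 1 : ℤ)) * ψ ((2 : ℝ) ^ (-(j + 1 : ℤ)) * x) = 1 / x) :
    ∃ ε₀ : ℝ, 0 < ε₀ ∧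
      ∀ ε : ℝ, 0 < ε → ε < ε₀ →
        ∃ C : ℝ, 0 < C ∧
          ∀ j : ℕ, 1 ≤ j → ∀ s : ℕ, 1 ≤ s → (s : ℝ) ≤ ε * j →
          ∀ (A B : ℤ) (Q : ℕ), Int.gcd A (Int.gcd B (Q : ℤ)) = 1 →
            2 ^ (s - 1) ≤ Q → Q < 2 ^ s →
          ∀ lam β : ℝ,
            |lam - (A : ℝ) / Q| ≤ (2 : ℝ) ^ ((ε - d) * j) →
            |β - (B : ℝ) / Q| ≤ (2 : ℝ) ^ ((ε - 1) * j) →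
            ‖Mj d ψ j lam β - weylS d A B Q *
                Hj d ψ j (lam - (A : ℝ) / Q) (β - (B : ℝ) / Q)‖
              ≤ C * (2 : ℝ) ^ ((2 * ε - 1) * j) ∧
            (1 < Int.gcd A (Q : ℤ) →
              ‖Mj d ψ j lam β‖ ≤ C * (2 : ℝ) ^ ((2 * ε - 1) * j)) := by
  have hc₂ : 0 < c₂ := lt_trans hc₁ hc₁₂
  -- bounds for ψ and deriv ψ
  have hψc : Continuous ψ := hψ.continuous
  have hψ'c : Continuous (deriv ψ) := hψ.continuous_deriv (by simp)
  have hψz : ∀ x : ℝ, ¬ (|x| ≤ c₂) → ψ x = 0 := by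
    intro x hx; by_contra h; exact hx (hψsupp x h).2
  have hψ'z : ∀ x : ℝ, c₂ < |x| → deriv ψ x = 0 := by
    intro x hx
    have hU : IsOpen {y : ℝ | c₂ < |y|} := isOpen_lt continuous_const continuous_abs
    have hev : ψ =ᶠ[nhds x] (fun _ => (0:ℝ)) := by
      filter_upwards [hU.mem_nhds hx] with y hy
      exact hψz y (not_le.mpr hy)
    rw [hev.deriv_eq]; exact deriv_const x 0
  have hcsψ : HasCompactSupport ψ := by
    apply HasCompactSupport.intro (isCompact_Icc (a := -c₂) (b := c₂))
    intro x hx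
    apply hψz
    rw [Set.mem_Icc, not_and_or, not_le, not_le] at hx
    rw [not_le]
    rcases hx with h | h
    · exact lt_abs.mpr (Or.inr (by linarith))
    · exact lt_abs.mpr (Or.inl h)
  have hcsψ' : HasCompactSupport (deriv ψ) := by
    apply HasCompactSupport.intro (isCompact_Icc (a := -c₂) (b := c₂))
    intro x hx
    apply hψ'z
    rw [Set.mem_Icc, not_and_or, not_le, not_le] at hx
    rcases hx with h | h
    · exact lt_abs.mpr (Or.inr (by linarith))
    · exact lt_abs.mpr (Or.inl h)
  obtain ⟨Kψ, hKψ⟩ := hcsψ.exists_bound_of_continuous hψc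
  obtain ⟨Kψ', hKψ'⟩ := hcsψ'.exists_bound_of_continuous hψ'c
  simp only [Real.norm_eq_abs] at hKψ hKψ'
  have hKψ0 : 0 ≤ Kψ := le_trans (abs_nonneg _) (hKψ 0)
  have hKψ'0 : 0 ≤ Kψ' := le_trans (abs_nonneg _) (hKψ' 0)
  -- constants
  refine ⟨1/2, by norm_num, ?_⟩
  intro ε hε hε2
  set K : ℕ := ⌈c₂⌉₊ + 1 with hK
  clear_value K
  set C₁ : ℝ := 2*Real.pi*(d*c₂^(d-1)+1)*Kψ + Kψ' with hC₁
  have hC₁0 : 0 ≤ C₁ := by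
    apply add_nonneg _ hKψ'0
    apply mul_nonneg _ hKψ0
    positivity
  refine ⟨(2*K+5)*C₁ + 1, by positivity, ?_⟩
  intro j hj s hs hsej A B Q hgcd hQlow hQhigh lam β hlam hβ
  have hQpos : 0 < Q := lt_of_lt_of_le (Nat.two_pow_pos (s-1)) hQlow
  have hQR : (0:ℝ) < Q := by exact_mod_cast hQpos
  set θ : ℝ := lam - (A:ℝ)/Q with hθ
  set γ : ℝ := β - (B:ℝ)/Q with hγ
  set w : ℝ := (2:ℝ)^(-(j:ℤ)) with hw
  have hwpos : 0 < w := by rw [hw]; positivity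
  have h2j1 : (1:ℝ) ≤ (2:ℝ)^(j:ℕ) := one_le_pow₀ one_le_two
  have hwinv : w * (2:ℝ)^(j:ℕ) = 1 := by
    rw [hw, zpow_neg, zpow_natCast]
    field_simp
  -- the functions
  set f : ℝ → ℂ := fun t => e (-(θ * t^d + γ * t)) * ((psik ψ (j:ℤ) t : ℝ) : ℂ) with hf
  set g : ℤ → ℂ := fun m => e (-((A:ℝ)/Q * (m:ℝ)^d + (B:ℝ)/Q * (m:ℝ))) with hg
  have hpsik : ∀ x : ℝ, psik ψ (j:ℤ) x = w * ψ (w * x) := fun x => rfl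
  -- support radius
  set T' : ℝ := c₂ * 2^(j:ℕ) + 1 with hT'
  have hT'pos : 0 < T' := by positivity
  have hψw0 : ∀ t : ℝ, T' ≤ |t| → ψ (w*t) = 0 := by
    intro t ht
    apply hψz
    rw [not_le, abs_mul, abs_of_pos hwpos]
    have h1 : w * T' ≤ w * |t| := mul_le_mul_of_nonneg_left ht hwpos.le
    have h2 : w * T' = c₂ + w := by
      rw [hT']; rw [mul_add, mul_one, mul_comm c₂, ← mul_assoc, hwinv, one_mul]
    nlinarith [hwpos]
  have hf0 : ∀ t : ℝ, T' ≤ |t| → f t = 0 := by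
    intro t ht
    rw [hf]
    simp only [hpsik, hψw0 t ht, mul_zero, Complex.ofReal_zero, mul_zero]
  -- continuity of f
  have hcψw : Continuous fun x : ℝ => w * ψ (w * x) :=
    continuous_const.mul (hψc.comp (continuous_const.mul continuous_id))
  have hcE : Continuous fun t : ℝ => e (-(θ * t^d + γ * t)) := by
    simp only [e]
    exact Complex.continuous_exp.comp
      (continuous_const.mul (Complex.continuous_ofReal.comp (by fun_prop)))
  have hcf : Continuous f := by
    rw [hf]
    simp only [hpsik]
    exact hcE.mul (Complex.continuous_ofReal.comp hcψw)
  -- Lipschitz bound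
  set L : ℝ := 2*Real.pi*(d * |θ| * (c₂*2^(j:ℕ))^(d-1) + |γ| ) * (w * Kψ) + w * w * Kψ' with hL
  have hL0 : 0 ≤ L := by
    apply add_nonneg
    · apply mul_nonneg _ (mul_nonneg hwpos.le hKψ0)
      positivity
    · exact mul_nonneg (mul_nonneg hwpos.le hwpos.le) hKψ'0
  have hlip : ∀ x y : ℝ, ‖f x - f y‖ ≤ L * |x - y| := by
    set c' : ℝ → ℝ := fun t => -(θ * ((d:ℝ) * t^(d-1)) + γ) with hc'
    set φ' : ℝ → ℝ := fun t => w * (deriv ψ (w*t) * w) with hφ'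
    set F' : ℝ → ℂ := fun t =>
        2 * (Real.pi:ℂ) * Complex.I * (c' t : ℂ) * e (-(θ * t^d + γ * t)) * ((w * ψ (w*t) : ℝ):ℂ)
        + e (-(θ * t^d + γ * t)) * ((φ' t : ℝ):ℂ) with hF'
    have hder : ∀ t : ℝ, HasDerivAt f (F' t) t := by
      intro t
      have hpow : HasDerivAt (fun u : ℝ => u^d) ((d:ℝ)*t^(d-1)) t := hasDerivAt_pow d t
      have hc : HasDerivAt (fun u : ℝ => -(θ * u^d + γ * u)) (c' t) t := by
        have h2 := ((hpow.const_mul θ).add ((hasDerivAt_id t).const_mul γ)).neg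
        refine h2.congr_deriv ?_
        rw [hc']
        simp
      have hE := hasDerivAt_e_comp hc
      have hlin : HasDerivAt (fun u : ℝ => w*u) w t := by
        simpa using (hasDerivAt_id t).const_mul w
      have houter : HasDerivAt ψ (deriv ψ (w*t)) (w*t) :=
        ((hψ.differentiable (by simp)) (w*t)).hasDerivAt
      have hφR : HasDerivAt (fun u : ℝ => w * ψ (w*u)) (φ' t) t := by
        have hcomp := (houter.comp t hlin).const_mul w
        rw [hφ']
        simpa [Function.comp] using hcomp
      have hφC : HasDerivAt (fun u : ℝ => ((w * ψ (w*u) : ℝ):ℂ)) ((φ' t : ℝ):ℂ) t :=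
        hφR.ofReal_comp
      have hmul := hE.mul hφC
      have hfeq : f = fun u : ℝ => e (-(θ * u^d + γ * u)) * ((w * ψ (w*u) : ℝ):ℂ) := by
        rw [hf]
        funext u
        rw [hpsik]
      rw [hfeq, hF']
      exact hmul
    have hbound : ∀ t : ℝ, ‖F' t‖ ≤ L := by
      intro t
      by_cases hcase : |t| ≤ c₂ * 2^(j:ℕ)
      · have hb1 : ‖F' t‖
            ≤ 2*Real.pi*|c' t| * (w*Kψ) + w * (Kψ' * w) := by
          rw [hF']
          dsimp only
          refine le_trans (norm_add_le _ _) ?_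
          have h1 : ‖2 * (Real.pi:ℂ) * Complex.I * (c' t : ℂ) * e (-(θ * t^d + γ * t))
              * ((w * ψ (w*t) : ℝ):ℂ)‖ = 2*Real.pi*|c' t| * 1 * |w * ψ (w*t)| := by
            rw [norm_mul, norm_mul, norm_two_pi_I_mul, norm_e, Complex.norm_real,
              Real.norm_eq_abs]
          have h2 : ‖e (-(θ * t^d + γ * t)) * ((φ' t : ℝ):ℂ)‖ = |φ' t| := by
            rw [norm_mul, norm_e, one_mul, Complex.norm_real, Real.norm_eq_abs]
          rw [h1, h2]
          have h3 : |w * ψ (w*t)| ≤ w * Kψ := by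
            rw [abs_mul, abs_of_pos hwpos]
            exact mul_le_mul_of_nonneg_left (hKψ _) hwpos.le
          have h4 : |φ' t| ≤ w * (Kψ' * w) := by
            rw [hφ']
            dsimp only
            rw [abs_mul, abs_mul, abs_of_pos hwpos]
            apply mul_le_mul_of_nonneg_left _ hwpos.le
            exact mul_le_mul_of_nonneg_right (hKψ' _) hwpos.le
          have h5 : (0:ℝ) ≤ 2*Real.pi*|c' t| := by positivity
          have h6 := mul_le_mul_of_nonneg_left h3 h5
          linarith [h6, h4]
        have hc'b : |c' t| ≤ (d:ℝ) * |θ| * (c₂*2^(j:ℕ))^(d-1) + |γ| := by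
          rw [hc']
          dsimp only
          rw [abs_neg]
          refine le_trans (abs_add_le _ _) ?_
          have h1 : |θ * ((d:ℝ) * t^(d-1))| = (d:ℝ) * |θ| * |t|^(d-1) := by
            rw [abs_mul, abs_mul, abs_pow, Nat.abs_cast]
            ring
          rw [h1]
          have h2 : |t|^(d-1) ≤ (c₂*2^(j:ℕ))^(d-1) :=
            pow_le_pow_left₀ (abs_nonneg t) hcase (d-1)
          have h3 : (d:ℝ) * |θ| * |t|^(d-1) ≤ (d:ℝ) * |θ| * (c₂*2^(j:ℕ))^(d-1) := by
            apply mul_le_mul_of_nonneg_left h2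
            positivity
          linarith
        rw [hL]
        have h7 : 2*Real.pi*|c' t| * (w*Kψ)
            ≤ 2*Real.pi*((d:ℝ) * |θ| * (c₂*2^(j:ℕ))^(d-1) + |γ|) * (w*Kψ) := by
          apply mul_le_mul_of_nonneg_right _ (mul_nonneg hwpos.le hKψ0)
          have hpi : (0:ℝ) ≤ 2*Real.pi := by positivity
          exact mul_le_mul_of_nonneg_left hc'b hpi
        have h8 : w * (Kψ' * w) = w * w * Kψ' := by ring
        linarith [hb1, h7]
      · have htlarge : c₂ < |w*t| := by
          rw [abs_mul, abs_of_pos hwpos]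
          have h1 : w * (c₂ * 2^(j:ℕ)) < w * |t| :=
            mul_lt_mul_of_pos_left (not_le.mp hcase) hwpos
          have h2 : w * (c₂ * 2^(j:ℕ)) = c₂ := by
            rw [mul_comm c₂, ← mul_assoc, hwinv, one_mul]
          linarith
        have hz1 : ψ (w*t) = 0 := hψz _ (not_le.mpr htlarge)
        have hz2 : deriv ψ (w*t) = 0 := hψ'z _ htlarge
        have : F' t = 0 := by
          rw [hF', hφ']
          dsimp only
          rw [hz1, hz2]
          simp
        rw [this, norm_zero]
        exact hL0
    intro x y
    have h := convex_univ.norm_image_sub_le_of_norm_hasDerivWithin_le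
      (fun z _ => (hder z).hasDerivWithinAt) (fun z _ => hbound z)
      (Set.mem_univ y) (Set.mem_univ x)
    simpa [Real.norm_eq_abs] using h
  -- the box
  set N : ℕ := (K * 2^j) / Q + 2 with hN
  clear_value N
  have hcov : T' + Q ≤ (N:ℝ) * Q := by
    have hdm := Nat.div_add_mod (K * 2^j) Q
    have hmlt := Nat.mod_lt (K * 2^j) hQpos
    have h1 : (Q:ℝ) * (((K * 2^j) / Q : ℕ) : ℝ) + (((K * 2^j) % Q : ℕ) : ℝ)
        = ((K * 2^j : ℕ) : ℝ) := by exact_mod_cast hdm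
    have h2 : (N:ℝ) * Q = (Q:ℝ) * (((K * 2^j) / Q : ℕ) : ℝ) + 2 * Q := by
      rw [hN]; push_cast; ring
    have h3 : (((K * 2^j) % Q : ℕ) : ℝ) + 1 ≤ (Q:ℝ) := by exact_mod_cast hmlt
    have h4 : c₂ ≤ (K:ℝ) := by
      rw [hK]; push_cast; linarith [Nat.le_ceil c₂]
    have h5 : ((K * 2^j : ℕ) : ℝ) = (K:ℝ) * 2^(j:ℕ) := by push_cast; ring
    have h6 : c₂ * 2^(j:ℕ) ≤ (K:ℝ) * 2^(j:ℕ) :=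
      mul_le_mul_of_nonneg_right h4 (by positivity)
    rw [hT', h2]
    linarith
  have hNR' : (0:ℝ) ≤ (N:ℝ) := Nat.cast_nonneg N
  -- identities
  have hMj : Mj d ψ j lam β
      = ∑ r ∈ Finset.range Q, g r *
          ∑ i ∈ Finset.range (2*N+1), f ((((i:ℤ) - (N:ℤ))*Q + (r:ℤ) : ℤ) : ℝ) := by
    have hfac : ∀ m : ℤ, (psik ψ (j:ℤ) (m:ℝ) : ℂ) * e (-(lam * (m:ℝ)^d + β * (m:ℝ)))
        = g m * f (m:ℝ) := by
      intro m
      rw [hg, hf]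
      dsimp only
      have harg : -(lam * (m:ℝ)^d + β * (m:ℝ))
          = -((A:ℝ)/Q * (m:ℝ)^d + (B:ℝ)/Q * (m:ℝ)) + -(θ * (m:ℝ)^d + γ * (m:ℝ)) := by
        rw [hθ, hγ]; ring
      rw [harg, e_add]; ring
    have hvan : ∀ m : ℤ, m ∉ Finset.Icc (-(N*Q : ℤ)) ((N+1)*Q - 1) → g m * f (m:ℝ) = 0 := by
      intro m hm
      rw [Finset.mem_Icc, not_and_or, not_le, not_le] at hm
      have hfz : f (m:ℝ) = 0 := by
        apply hf0
        have hNQ : T' ≤ (N:ℝ) * Q := by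
          have : (0:ℝ) < Q := hQR
          linarith [hcov]
        have hcast : (((N*Q : ℕ) : ℤ) : ℝ) = (N:ℝ) * Q := by push_cast; ring
        rcases hm with hm | hm
        · have h1 : (m:ℝ) < -((N:ℝ)*Q) := by
            have : (m:ℝ) < ((-(N*Q : ℤ) : ℤ):ℝ) := by exact_mod_cast hm
            push_cast at this
            linarith
          rw [abs_of_neg (by linarith : (m:ℝ) < 0)]
          linarith
        · have h1 : ((N:ℝ)+1)*Q - 1 < (m:ℝ) := by
            have : ((((N:ℕ)+1)*Q - 1 : ℤ):ℝ) < (m:ℝ) := by exact_mod_cast hm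
            push_cast at this
            linarith
          have hQ1 : (1:ℝ) ≤ Q := by exact_mod_cast hQpos
          have hexp : ((N:ℝ)+1)*Q = (N:ℝ)*Q + Q := by ring
          have hNQ0 : (0:ℝ) ≤ (N:ℝ)*Q := mul_nonneg hNR' hQR.le
          have h2 : (0:ℝ) ≤ (m:ℝ) := by linarith
          rw [abs_of_nonneg h2]
          linarith
      rw [hfz, mul_zero]
    rw [Mj, tsum_congr hfac, tsum_eq_sum (hvan ·),
      sum_Icc_eq_double (fun m => g m * f (m:ℝ)) Q N hQpos]
    refine Finset.sum_congr rfl fun r hr => ?_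
    rw [Finset.mul_sum]
    refine Finset.sum_congr rfl fun i hi => ?_
    congr 1
    rw [hg]
    exact g_periodic d A B Q hQpos ((i:ℤ)-N) (r:ℤ)
  have hWH : weylS d A B Q * Hj d ψ j θ γ
      = ∑ r ∈ Finset.range Q, g r * ((Q:ℂ)⁻¹ * ∫ t : ℝ, f t) := by
    have hHj : Hj d ψ j θ γ = ∫ t : ℝ, f t := rfl
    have hws : weylS d A B Q = (Q:ℂ)⁻¹ * ∑ r ∈ Finset.range Q, g (r:ℤ) := by
      rw [weylS]
      congr 1
    rw [hws, hHj, mul_comm ((Q:ℂ)⁻¹) _, mul_assoc, Finset.sum_mul]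
  -- main bound
  have hmain : ‖Mj d ψ j lam β - weylS d A B Q * Hj d ψ j θ γ‖
      ≤ (Q:ℝ) * ((2*N+1 : ℝ) * (L * Q)) := by
    rw [hMj, hWH, ← Finset.sum_sub_distrib]
    have hterm : ∀ r ∈ Finset.range Q,
        ‖g r * (∑ i ∈ Finset.range (2*N+1), f ((((i:ℤ) - (N:ℤ))*Q + (r:ℤ) : ℤ) : ℝ))
          - g r * ((Q:ℂ)⁻¹ * ∫ t : ℝ, f t)‖ ≤ (2*N+1 : ℝ) * (L * Q) := by
      intro r hr
      rw [← mul_sub, norm_mul, hg, norm_e, one_mul]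
      exact key f hcf L hL0 hlip Q hQpos r (Finset.mem_range.mp hr) N T' hf0 hcov
    calc ‖∑ r ∈ Finset.range Q, _‖ ≤ ∑ r ∈ Finset.range Q, ((2*N+1 : ℝ) * (L * Q)) :=
          le_trans (norm_sum_le _ _) (Finset.sum_le_sum hterm)
      _ = (Q:ℝ) * ((2*N+1 : ℝ) * (L * Q)) := by
          rw [Finset.sum_const, Finset.card_range, nsmul_eq_mul]
  -- numeric bound
  have hnum : (Q:ℝ) * ((2*N+1 : ℝ) * (L * Q)) ≤ ((2*K+5)*C₁ + 1) * (2:ℝ)^((2*ε-1)*(j:ℝ)) := by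
    have hJ : ((2^j : ℕ) : ℝ) = (2:ℝ)^((j:ℝ)) := by
      rw [Real.rpow_natCast]
      push_cast
      ring
    set J : ℝ := (2:ℝ)^((j:ℝ)) with hJdef
    set P : ℝ := (2:ℝ)^(ε*(j:ℝ)) with hPdef
    set X3 : ℝ := (2:ℝ)^((ε-2)*(j:ℝ)) with hX3def
    have hPpos : 0 < P := Real.rpow_pos_of_pos two_pos _
    have hJpos : 0 < J := Real.rpow_pos_of_pos two_pos _
    have hX3pos : 0 < X3 := Real.rpow_pos_of_pos two_pos _
    have hjnn : (0:ℝ) ≤ (j:ℝ) := Nat.cast_nonneg j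
    have hεj : 0 ≤ ε * (j:ℝ) := mul_nonneg hε.le hjnn
    have hQP : (Q:ℝ) ≤ P := by
      have h1 : (Q:ℝ) < ((2^s : ℕ):ℝ) := by exact_mod_cast hQhigh
      have h2 : ((2^s:ℕ):ℝ) = (2:ℝ)^((s:ℝ)) := by
        rw [Real.rpow_natCast]
        push_cast
        ring
      have h3 : (2:ℝ)^((s:ℝ)) ≤ P := Real.rpow_le_rpow_of_exponent_le one_le_two hsej
      linarith
    have hPJ : P ≤ J := by
      apply Real.rpow_le_rpow_of_exponent_le one_le_two
      have : ε * (j:ℝ) ≤ 1 * (j:ℝ) := mul_le_mul_of_nonneg_right (by linarith) hjnn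
      linarith
    have hQJ : (Q:ℝ) ≤ J := le_trans hQP hPJ
    -- bound on L
    have hLb : L ≤ C₁ * X3 := by
      have hwr : w = (2:ℝ)^(-(j:ℝ)) := by
        rw [hw, ← Real.rpow_intCast]
        norm_num
      have hd1 : (1:ℕ) ≤ d := le_trans one_le_two hd
      have hc2pow : (c₂*2^(j:ℕ))^(d-1) = c₂^(d-1) * (2:ℝ)^(((j*(d-1) : ℕ)):ℝ) := by
        rw [Real.rpow_natCast, mul_pow, ← pow_mul]
      have h12 : (2:ℝ)^((ε-(d:ℝ))*(j:ℝ)) * (2:ℝ)^(((j*(d-1) : ℕ)):ℝ) = (2:ℝ)^((ε-1)*(j:ℝ)) := by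
        rw [← Real.rpow_add two_pos]
        congr 1
        have : ((j*(d-1) : ℕ) : ℝ) = (j:ℝ) * ((d:ℝ) - 1) := by
          push_cast [Nat.cast_sub hd1]
          ring
        rw [this]; ring
      have hθX : |θ| * (2:ℝ)^(((j*(d-1) : ℕ)):ℝ) ≤ (2:ℝ)^((ε-1)*(j:ℝ)) := by
        rw [← h12]
        apply mul_le_mul_of_nonneg_right hlam
        positivity
      have hA : (d:ℝ) * |θ| * (c₂*2^(j:ℕ))^(d-1) + |γ|
          ≤ ((d:ℝ) * c₂^(d-1) + 1) * (2:ℝ)^((ε-1)*(j:ℝ)) := by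
        rw [hc2pow]
        have h1 : (d:ℝ) * |θ| * (c₂^(d-1) * (2:ℝ)^(((j*(d-1) : ℕ)):ℝ))
            = ((d:ℝ) * c₂^(d-1)) * (|θ| * (2:ℝ)^(((j*(d-1) : ℕ)):ℝ)) := by ring
        rw [h1]
        have h2 : ((d:ℝ) * c₂^(d-1)) * (|θ| * (2:ℝ)^(((j*(d-1) : ℕ)):ℝ))
            ≤ ((d:ℝ) * c₂^(d-1)) * (2:ℝ)^((ε-1)*(j:ℝ)) := by
          apply mul_le_mul_of_nonneg_left hθX
          positivity
        have h3 : |γ| ≤ (2:ℝ)^((ε-1)*(j:ℝ)) := hβ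
        linarith
      have hX2w : (2:ℝ)^((ε-1)*(j:ℝ)) * w = X3 := by
        rw [hwr, hX3def, ← Real.rpow_add two_pos]
        congr 1; ring
      have hww : w * w ≤ X3 := by
        rw [hwr, hX3def, ← Real.rpow_add two_pos]
        apply Real.rpow_le_rpow_of_exponent_le one_le_two
        have hexp : (ε-2)*(j:ℝ) = ε*(j:ℝ) - 2*(j:ℝ) := by ring
        linarith
      have step1 : 2*Real.pi*((d : ℝ) * |θ| * (c₂*2^(j:ℕ))^(d-1) + |γ|) * (w * Kψ)
          ≤ 2*Real.pi*(((d:ℝ) * c₂^(d-1) + 1) * (2:ℝ)^((ε-1)*(j:ℝ))) * (w * Kψ) := by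
        apply mul_le_mul_of_nonneg_right _ (mul_nonneg hwpos.le hKψ0)
        apply mul_le_mul_of_nonneg_left hA
        positivity
      have step2 : 2*Real.pi*(((d:ℝ) * c₂^(d-1) + 1) * (2:ℝ)^((ε-1)*(j:ℝ))) * (w * Kψ)
          = (2*Real.pi*((d:ℝ) * c₂^(d-1) + 1) * Kψ) * ((2:ℝ)^((ε-1)*(j:ℝ)) * w) := by
        ring
      have step3 : w * w * Kψ' ≤ X3 * Kψ' :=
        mul_le_mul_of_nonneg_right hww hKψ'0
      have h5 : 2*Real.pi*((d:ℝ) * c₂^(d-1) + 1)*Kψ * ((2:ℝ)^((ε-1)*(j:ℝ)) * w)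
          = 2*Real.pi*((d:ℝ) * c₂^(d-1) + 1)*Kψ * X3 := by rw [hX2w]
      have h6 := le_trans step1 (le_of_eq (step2.trans h5))
      have h7 : L ≤ 2*Real.pi*((d:ℝ) * c₂^(d-1) + 1)*Kψ * X3 + X3 * Kψ' := by
        rw [hL]; linarith [step3, h6]
      have h8 : 2*Real.pi*((d:ℝ) * c₂^(d-1) + 1)*Kψ * X3 + X3 * Kψ'
          = (2*Real.pi*((d:ℝ) * c₂^(d-1) + 1)*Kψ + Kψ') * X3 := by ring
      rw [hC₁]
      linarith [h7, h8]
    have hL0' : 0 ≤ L := hL0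
    have hC₁X3 : 0 ≤ C₁ * X3 := mul_nonneg hC₁0 hX3pos.le
    -- count bound
    have hNreal : (N:ℝ) ≤ (K:ℝ) * J / Q + 2 := by
      rw [hN]
      push_cast
      have h1 : (((K * 2^j) / Q : ℕ) : ℝ) ≤ ((K * 2^j : ℕ) : ℝ) / Q := Nat.cast_div_le
      have h2 : ((K * 2^j : ℕ):ℝ) = (K:ℝ) * J := by rw [← hJ]; push_cast; ring
      rw [h2] at h1
      push_cast at h1
      linarith
    have hcount : (2*(N:ℝ)+1) * Q ≤ (2*(K:ℝ)+5) * J := by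
      have h1 : (2*(N:ℝ)+1) * Q ≤ (2*((K:ℝ)*J/Q + 2)+1) * Q := by
        apply mul_le_mul_of_nonneg_right _ hQR.le
        linarith
      have h2 : (2*((K:ℝ)*J/Q + 2)+1) * Q = 2*(K:ℝ)*J + 5*Q := by
        field_simp
        ring
      have h3 : 2*(K:ℝ)*J + 5*Q ≤ 2*(K:ℝ)*J + 5*J := by linarith
      have h4 : (2*(K:ℝ)+5) * J = 2*(K:ℝ)*J + 5*J := by ring
      linarith
    -- assemble
    have hLQ : L * Q ≤ (C₁ * X3) * P :=
      mul_le_mul hLb hQP (Nat.cast_nonneg Q) hC₁X3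
    have hfin : (Q:ℝ) * ((2*N+1 : ℝ) * (L * Q)) = ((2*(N:ℝ)+1) * Q) * (L * Q) := by
      push_cast; ring
    rw [hfin]
    have hmm : ((2*(N:ℝ)+1) * Q) * (L * Q) ≤ ((2*(K:ℝ)+5) * J) * ((C₁ * X3) * P) := by
      apply mul_le_mul hcount hLQ (mul_nonneg hL0 (Nat.cast_nonneg Q))
      positivity
    have hJX3P : J * (X3 * P) = (2:ℝ)^((2*ε-1)*(j:ℝ)) := by
      rw [hJdef, hX3def, hPdef, ← Real.rpow_add two_pos, ← Real.rpow_add two_pos]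
      congr 1; ring
    calc ((2*(N:ℝ)+1) * Q) * (L * Q) ≤ ((2*(K:ℝ)+5) * J) * ((C₁ * X3) * P) := hmm
      _ = ((2*(K:ℝ)+5) * C₁) * (J * (X3 * P)) := by ring
      _ = ((2*(K:ℝ)+5) * C₁) * (2:ℝ)^((2*ε-1)*(j:ℝ)) := by rw [hJX3P]
      _ ≤ ((2*(K:ℝ)+5)*C₁ + 1) * (2:ℝ)^((2*ε-1)*(j:ℝ)) := by
          apply mul_le_mul_of_nonneg_right _ (Real.rpow_pos_of_pos two_pos _).le
          linarith
  have hfinal : ‖Mj d ψ j lam β - weylS d A B Q * Hj d ψ j θ γ‖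
      ≤ ((2*K+5)*C₁ + 1) * (2:ℝ)^((2*ε-1)*(j:ℝ)) := le_trans hmain hnum
  refine ⟨hfinal, ?_⟩
  intro hAQ
  have hz := weylS_eq_zero d A B Q hQpos hgcd hAQ
  calc ‖Mj d ψ j lam β‖ = ‖Mj d ψ j lam β - weylS d A B Q * Hj d ψ j θ γ‖ := by
        rw [hz, zero_mul, sub_zero]
    _ ≤ _ := hfinal

end
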